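/- arXiv:2402.00899 — 2 statements merged into one kernel-verified Lean document; each statement's English description precedes it below -/
import Mathlib

section
/- Let Y_1, …, Y_m, Z be independent and identically distributed real-valued random variables, let G_m be the empirical cumulative distribution function of Y_1, …, Y_m, and let G_m^† denote its pseudo-inverse. Then for every Δ ∈ (0,1) and every ε ∈ (0,1], the joint probability (over the sample Y_1, …, Y_m and Z) satisfies P(Z ≤ G_m^†(Δ)) ≥ max(Δ − ε, 0)·(1 − 2·exp(−2mε²)). -/
/-!
The pooled sample `(Y₁, …, Yₘ, Z)` is i.i.d., hence exchangeable, so the event that a given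
coordinate has fewer than `k` coordinates strictly below it has the same probability for each of
the `m + 1` coordinates; since at least `k` coordinates always have this property, the probability
is at least `k / (m + 1)`. With `k = ⌈Δ m⌉` the event for `Z` forces `Z ≤ G_m^†(Δ)`, so the
probability in question is at least `Δ m / (m + 1)`, and an elementary estimate shows that this
dominates `max(Δ - ε, 0) (1 - 2 exp(-2 m ε²))`.
-/

open MeasureTheory ProbabilityTheory

/-- Empirical cumulative distribution function of the sample `x : Fin m → ℝ`. -/
noncomputable def ecdf {m : ℕ} (x : Fin m → ℝ) (s : ℝ) : ℝ :=
  (1 / m) * ∑ i, if x i ≤ s then (1 : ℝ) else 0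

/-- Pseudo-inverse of a function `G : ℝ → ℝ`: `G†(y) = inf {x | G x ≥ y}`. -/
noncomputable def pinv (G : ℝ → ℝ) (y : ℝ) : ℝ :=
  sInf {x : ℝ | G x ≥ y}

open Finset
open scoped ENNReal

section StrictRank

variable {ι α : Type*} [Fintype ι] [LinearOrder α]

noncomputable def strictRank (x : ι → α) (j : ι) : ℕ := #{i | x i < x j}

lemma strictRank_comp_equiv (x : ι → α) (e : ι ≃ ι) (j : ι) :
    strictRank (x ∘ e) j = strictRank x (e j) :=
  card_nbij' e e.symm (fun _ => by simp) (fun _ => by simp) (fun _ _ => by simp)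
    (fun _ _ => by simp)

lemma strictRank_inr (x : ι ⊕ Unit → α) :
    strictRank x (.inr ()) = #{i | x (.inl i) < x (.inr ())} := by
  rw [strictRank, card_filter, card_filter, Fintype.sum_sum_type]
  simp

lemma le_card_filter_strictRank_lt (x : ι → α) {k : ℕ} (hk : k ≤ Fintype.card ι) :
    k ≤ #{j | strictRank x j < k} := by
  classical
  by_contra! hlt
  -- A minimiser `j₀` of `x` among the indices of rank `≥ k` has only indices of rank `< k`
  -- strictly below it, so its own rank is `< k`.
  have hhigh : ({j | ¬strictRank x j < k} : Finset ι).Nonempty := by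
    rw [← card_pos, filter_not, card_sdiff_of_subset (filter_subset _ _), card_univ]
    omega
  obtain ⟨j₀, hj₀, hmin⟩ := exists_min_image _ x hhigh
  have hbelow :
      filter (fun i => x i < x j₀) univ ⊆ filter (fun j => strictRank x j < k) univ := by
    intro i hi
    simp only [mem_filter, mem_univ, true_and] at hi hmin ⊢
    by_contra hi'
    exact (hmin i hi').not_gt hi
  have := card_le_card hbelow
  simp only [mem_filter, mem_univ, true_and] at hj₀
  unfold strictRank at hj₀
  omega

end StrictRank

section Exchangeable

variable {ι α : Type*} [Fintype ι] [MeasurableSpace α] (μ : Measure α)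

lemma measure_pi_preimage_comp_equiv [SigmaFinite μ] (e : ι ≃ ι) (s : Set (ι → α)) :
    Measure.pi (fun _ : ι => μ) ((· ∘ e) ⁻¹' s) = Measure.pi (fun _ => μ) s :=
  (measurePreserving_arrowCongr' (fun _ => μ) (fun _ => μ) e.symm (MeasurableEquiv.refl α)
    fun _ => MeasurePreserving.id μ).measure_preimage_equiv s

variable [LinearOrder α]

lemma measure_pi_strictRank_lt_congr [SigmaFinite μ] [DecidableEq ι] (i j : ι) (k : ℕ) :
    Measure.pi (fun _ => μ) {x | strictRank x i < k}
      = Measure.pi (fun _ => μ) {x | strictRank x j < k} := by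
  rw [← measure_pi_preimage_comp_equiv μ (Equiv.swap i j)]
  congr 1
  ext x
  simp [strictRank_comp_equiv]

variable [TopologicalSpace α] [OrderClosedTopology α] [OpensMeasurableSpace α]
  [SecondCountableTopology α]

lemma measurable_strictRank (j : ι) : Measurable fun x : ι → α => strictRank x j := by
  classical
  simp only [strictRank, card_filter]
  exact Finset.measurable_sum _ fun i _ =>
    Measurable.ite (measurableSet_lt (measurable_pi_apply i) (measurable_pi_apply j))
      measurable_const measurable_const

lemma natCast_le_card_mul_measure_pi_strictRank_lt [IsProbabilityMeasure μ] (j : ι) {k : ℕ}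
    (hk : k ≤ Fintype.card ι) :
    (k : ℝ≥0∞) ≤ Fintype.card ι * Measure.pi (fun _ => μ) {x | strictRank x j < k} := by
  classical
  set ν := Measure.pi fun _ : ι => μ
  set S : ι → Set (ι → α) := fun i => {x | strictRank x i < k}
  have hS : ∀ i, MeasurableSet (S i) := fun i => measurable_strictRank i measurableSet_Iio
  have hcount : ∀ x, (k : ℝ≥0∞) ≤ ∑ i, (S i).indicator 1 x := fun x => by
    have hsum : ∑ i, (S i).indicator 1 x = (#{i | strictRank x i < k} : ℝ≥0∞) := by
      simp [S, Set.indicator_apply, sum_boole]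
    exact hsum ▸ Nat.cast_le.mpr (le_card_filter_strictRank_lt x hk)
  calc (k : ℝ≥0∞) = ∫⁻ _, (k : ℝ≥0∞) ∂ν := by simp
    _ ≤ ∫⁻ x, ∑ i, (S i).indicator 1 x ∂ν := lintegral_mono hcount
    _ = ∑ i, ν (S i) := by
        rw [lintegral_finsetSum _ fun i _ => measurable_one.indicator (hS i)]
        exact sum_congr rfl fun i _ => lintegral_indicator_one (hS i)
    _ = Fintype.card ι * ν (S j) := by
        rw [sum_congr rfl fun i _ => measure_pi_strictRank_lt_congr μ i j k, sum_const,
          card_univ, nsmul_eq_mul]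

end Exchangeable

lemma ecdf_eq_card {m : ℕ} (y : Fin m → ℝ) (s : ℝ) : ecdf y s = #{i | y i ≤ s} / m := by
  rw [ecdf, sum_boole, one_div_mul_eq_div]

lemma le_pinv_ecdf_of_card_lt {m : ℕ} (hm : 0 < m) (y : Fin m → ℝ) {z Δ : ℝ} (hΔ : Δ ≤ 1)
    (h : (#{i | y i < z} : ℝ) < Δ * m) : z ≤ pinv (ecdf y) Δ := by
  have hm' : (0 : ℝ) < m := by exact_mod_cast hm
  refine le_csInf ?_ fun b hb => ?_
  · have : Nonempty (Fin m) := Fin.pos_iff_nonempty.mp hm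
    obtain ⟨i₀, -, hi₀⟩ := exists_max_image univ y univ_nonempty
    refine ⟨y i₀, ?_⟩
    rw [Set.mem_ofPred_eq, ecdf_eq_card, filter_true_of_mem fun i _ => hi₀ i (mem_univ i),
      card_univ, Fintype.card_fin, div_self hm'.ne']
    exact hΔ
  · by_contra! hbz
    have hcard : (#{i | y i ≤ b} : ℝ) ≤ #{i | y i < z} :=
      Nat.cast_le.mpr <| card_le_card fun i hi => by
        simp only [mem_filter, mem_univ, true_and] at hi ⊢
        exact hi.trans_lt hbz
    have : ecdf y b < Δ := by
      rw [ecdf_eq_card, div_lt_iff₀ hm']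
      linarith
    exact (not_le.mpr this) hb

theorem div_le_measure_le_pinv_ecdf {Ω : Type*} [MeasurableSpace Ω] (P : Measure Ω)
    [IsProbabilityMeasure P] {m : ℕ} (Y : Fin m → Ω → ℝ) (Z : Ω → ℝ)
    (hmY : ∀ i, Measurable (Y i)) (hmZ : Measurable Z)
    (hindep : iIndepFun (Sum.elim Y fun _ : Unit => Z) P)
    (hident : ∀ i, P.map (Y i) = P.map Z) {Δ : ℝ} (hΔ : Δ ≤ 1) :
    Δ * m / (m + 1) ≤ (P {ω | Z ω ≤ pinv (ecdf fun i => Y i ω) Δ}).toReal := by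
  rcases Nat.eq_zero_or_pos m with rfl | hm
  · simp
  set W := Sum.elim Y fun _ : Unit => Z
  set μ := P.map Z
  have : IsProbabilityMeasure μ := Measure.isProbabilityMeasure_map hmZ.aemeasurable
  have hW : ∀ i, Measurable (W i) := by rintro (i | u); exacts [hmY i, hmZ]
  have hlaw : P.map (fun ω i => W i ω) = Measure.pi fun _ => μ := by
    rw [hindep.map_fun_eq_pi_map fun i => (hW i).aemeasurable]
    congr with (i | u) <;> simp [W, μ, hident]
  set k := ⌈Δ * m⌉₊
  have hk : k ≤ Fintype.card (Fin m ⊕ Unit) := by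
    simp only [Fintype.card_sum, Fintype.card_fin, Fintype.card_unit, k, Nat.ceil_le]
    push_cast
    nlinarith
  set S := {x : Fin m ⊕ Unit → ℝ | strictRank x (.inr ()) < k}
  have hsub : (fun ω i => W i ω) ⁻¹' S ⊆ {ω | Z ω ≤ pinv (ecdf fun i => Y i ω) Δ} := by
    intro ω hω
    have hrank : strictRank (fun i => W i ω) (.inr ()) < k := hω
    rw [strictRank_inr] at hrank
    exact le_pinv_ecdf_of_card_lt hm _ hΔ (Nat.lt_ceil.mp hrank)
  have hprob : (k : ℝ≥0∞) ≤ (m + 1 : ℕ) * P ((fun ω i => W i ω) ⁻¹' S) := by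
    have hSm : MeasurableSet S := measurable_strictRank _ measurableSet_Iio
    rw [← Measure.map_apply (measurable_pi_lambda _ hW) hSm, hlaw]
    simpa using natCast_le_card_mul_measure_pi_strictRank_lt μ (.inr ()) hk
  have hprob_real : (k : ℝ) ≤ (m + 1) * (P ((fun ω i => W i ω) ⁻¹' S)).toReal := by
    have := ENNReal.toReal_mono (by finiteness) hprob
    rw [ENNReal.toReal_mul, ENNReal.toReal_natCast, ENNReal.toReal_natCast] at this
    exact_mod_cast this
  rw [div_le_iff₀ (by positivity)]
  calc Δ * m ≤ k := Nat.le_ceil _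
    _ ≤ (m + 1) * (P ((fun ω i => W i ω) ⁻¹' S)).toReal := hprob_real
    _ ≤ (m + 1) * (P {ω | Z ω ≤ pinv (ecdf fun i => Y i ω) Δ}).toReal := by
        gcongr
        exact measure_ne_top _ _
    _ = _ := mul_comm _ _

lemma max_sub_mul_one_sub_two_exp_le {Δ ε : ℝ} (m : ℕ) (hΔ₀ : 0 ≤ Δ) (hΔ₁ : Δ ≤ 1)
    (hε : 0 < ε) : max (Δ - ε) 0 * (1 - 2 * Real.exp (-2 * m * ε ^ 2)) ≤ Δ * m / (m + 1) := by
  have hm : (0 : ℝ) < m + 1 := by positivity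
  have hrhs : 0 ≤ Δ * m / (m + 1) := by positivity
  rcases le_or_gt (1 - 2 * Real.exp (-2 * m * ε ^ 2)) 0 with hneg | hpos
  · exact (mul_nonpos_of_nonneg_of_nonpos (le_max_right _ _) hneg).trans hrhs
  -- From `exp t ≥ 1 + t`, the second factor is positive only if `4 m ε² > 1`, i.e. only if
  -- `ε > 1 / (m + 1)`.
  have hexp := Real.add_one_le_exp (-2 * m * ε ^ 2)
  have hε_large : 1 < (m + 1) * ε := by
    have : 1 < ((m + 1) * ε) ^ 2 := by nlinarith [sq_nonneg ((m : ℝ) - 1)]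
    nlinarith
  have hmax : max (Δ - ε) 0 ≤ Δ * m / (m + 1) := by
    refine max_le ?_ hrhs
    rw [le_div_iff₀ hm]
    nlinarith
  exact (mul_le_of_le_one_right (le_max_right _ _)
    (by linarith [Real.exp_pos (-2 * m * ε ^ 2)])).trans hmax

/-- A fresh i.i.d. sample falls at or below the empirical `Δ`-quantile of the
training sample with probability at least `max(Δ-ε,0) (1 - 2 exp(-2 m ε²))`. -/
theorem stmt3 {Ω : Type*} [MeasurableSpace Ω] (P : Measure Ω) [IsProbabilityMeasure P]
    {m : ℕ} (Y : Fin m → Ω → ℝ) (Z : Ω → ℝ)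
    (hmY : ∀ i, Measurable (Y i)) (hmZ : Measurable Z)
    (hindep : iIndepFun (Sum.elim Y fun _ : Unit => Z) P)
    (hident : ∀ i, Measure.map (Y i) P = Measure.map Z P)
    (Δ ε : ℝ) (hΔ : Δ ∈ Set.Ioo (0 : ℝ) 1) (hε : ε ∈ Set.Ioc (0 : ℝ) 1) :
    (P {ω | Z ω ≤ pinv (ecdf fun i => Y i ω) Δ}).toReal
      ≥ max (Δ - ε) 0 * (1 - 2 * Real.exp (-2 * m * ε ^ 2)) :=
  (max_sub_mul_one_sub_two_exp_le m hΔ.1.le hΔ.2.le hε.1).trans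
    (div_le_measure_le_pinv_ecdf P Y Z hmY hmZ hindep hident hΔ.2.le)
end

section
/- Let U be a measurable space, L a finite set (with the discrete σ-algebra), F: U → L and Φ: U → ℝ^d measurable maps, h: ℝ^d → ℝ a measurable map, and P_D a probability measure on U × L. Fix ℓ_j ∈ L such that both events B_- = {(u, y) : F(u) = ℓ_j, y ≠ ℓ_j} and B_+ = {(u, y) : F(u) = ℓ_j, y = ℓ_j} have positive P_D-measure. Let (V_1, W_1), …, (V_m, W_m) be independent samples from P_D(· | B_-) with empirical cumulative distribution function G_m of h(Φ(V_1)), …, h(Φ(V_m)), let (U_1, Y_1), …, (U_p, Y_p) be independent samples from P_D(· | B_+) (independent of the first sample) with empirical cumulative distribution function F_p of h(Φ(U_1)), …, h(Φ(U_p)), and set θ = G_m^†(Δ) for Δ ∈ (0,1). Let P_c^+ denote the cumulative distribution function of h(Φ(u')) where (u', y') ∼ P_D(· | B_+). Then for every ε ∈ (0,1], with probability at least 1 − 2·exp(−2pε²) over both training samples, one has P_c^+(θ) ≤ min(1, F_p(θ) + ε); equivalently, the conditional probability that a fresh independent sample (u, ℓ) ∼ P_D with F(u) = ℓ_j and ℓ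 = ℓ_j satisfies h(Φ(u)) > θ, given the training samples, is at least 1 − min(1, F_p(θ) + ε). -/
open MeasureTheory ProbabilityTheory

/-!
For a fixed threshold `c`, the indicators `1{h(Φ(Uᵢ)) ≤ c}` of the positive sample are i.i.d.
Bernoulli with mean `P_c⁺(c)`, so Hoeffding's inequality bounds the probability of
`F_p(c) + ε ≤ P_c⁺(c)` by `exp(-2pε²)`. The threshold `θ` is a measurable function of the
misclassified sample alone, hence independent of the positive sample, and integrating the
fixed-threshold bound against the law of `θ` gives the same bound at `θ`. Off that event
`P_c⁺(θ) < F_p(θ) + ε`, and the acceptance bound is the complementary probability.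
-/

open Set

section Ecdf

variable {m : ℕ}

lemma natCast_mul_ecdf (x : Fin m → ℝ) (s : ℝ) :
    (m : ℝ) * ecdf x s = ∑ i, if x i ≤ s then (1 : ℝ) else 0 := by
  rcases eq_or_ne m 0 with rfl | hm
  · simp
  · simp only [ecdf]
    field_simp

lemma ecdf_mono (x : Fin m → ℝ) : Monotone (ecdf x) := by
  intro s t hst
  unfold ecdf
  gcongr with i
  split_ifs with hs ht <;> first | exact absurd (hs.trans hst) ht | norm_num

lemma ecdf_eq_zero_of_lt (x : Fin m → ℝ) {s : ℝ} (hs : ∀ i, s < x i) : ecdf x s = 0 := by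
  simp [ecdf, fun i => not_le.2 (hs i)]

lemma ecdf_eq_one_of_le {x : Fin m → ℝ} (hm : 0 < m) {s : ℝ} (hs : ∀ i, x i ≤ s) :
    ecdf x s = 1 := by
  simp only [ecdf, hs, if_true, Finset.sum_const, Finset.card_univ, Fintype.card_fin]
  field_simp
  simp

lemma Measurable.ecdf {β : Type*} [MeasurableSpace β] {x : β → Fin m → ℝ} {s : β → ℝ}
    (hx : Measurable x) (hs : Measurable s) : Measurable fun b => _root_.ecdf (x b) (s b) :=
  measurable_const.mul <| Finset.measurable_sum _ fun i _ =>
    Measurable.ite (measurableSet_le ((measurable_pi_apply i).comp hx) hs)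
      measurable_const measurable_const

end Ecdf

lemma pinv_le_iff_forall_rat {G : ℝ → ℝ} (hG : Monotone G) {y : ℝ}
    (hne : {x | G x ≥ y}.Nonempty) (hbdd : BddBelow {x | G x ≥ y}) (c : ℝ) :
    pinv G y ≤ c ↔ ∀ r : ℚ, c < r → y ≤ G r := by
  constructor
  · intro h r hr
    obtain ⟨x, hx, hxr⟩ := (csInf_lt_iff hbdd hne).1 (h.trans_lt hr)
    exact hx.trans (hG hxr.le)
  · intro h
    by_contra! hc
    obtain ⟨r, hcr, hr⟩ := exists_rat_btwn hc
    exact (csInf_le hbdd (h r hcr)).not_gt hr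

lemma pinv_ecdf_le_iff_forall_rat {m : ℕ} (hm : 0 < m) (x : Fin m → ℝ) {Δ : ℝ}
    (hΔ₀ : 0 < Δ) (hΔ₁ : Δ ≤ 1) (c : ℝ) :
    pinv (ecdf x) Δ ≤ c ↔ ∀ r : ℚ, c < r → Δ ≤ ecdf x r := by
  have : Nonempty (Fin m) := ⟨⟨0, hm⟩⟩
  refine pinv_le_iff_forall_rat (ecdf_mono x) ?_ ?_ c
  · refine ⟨Finset.univ.sup' Finset.univ_nonempty x, ?_⟩
    rwa [mem_ofPred_eq, ecdf_eq_one_of_le hm fun i => Finset.le_sup' x (Finset.mem_univ i)]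
  · refine ⟨Finset.univ.inf' Finset.univ_nonempty x, fun s hs => ?_⟩
    by_contra! hlt
    have := ecdf_eq_zero_of_lt x fun i => hlt.trans_le (Finset.inf'_le x (Finset.mem_univ i))
    exact (hs.trans_eq this).not_gt hΔ₀

lemma measurable_pinv_ecdf {β : Type*} [MeasurableSpace β] {m : ℕ} {x : β → Fin m → ℝ}
    (hx : Measurable x) {Δ : ℝ} (hΔ₀ : 0 < Δ) (hΔ₁ : Δ ≤ 1) :
    Measurable fun b => pinv (ecdf (x b)) Δ := by
  rcases Nat.eq_zero_or_pos m with rfl | hm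
  · have : ∀ b, {s | ecdf (x b) s ≥ Δ} = ∅ := fun b => by
      ext s
      simp [ecdf, hΔ₀.not_ge]
    simp only [pinv, this, Real.sInf_empty, measurable_const]
  · refine measurable_of_Iic fun c => ?_
    have : (fun b => pinv (ecdf (x b)) Δ) ⁻¹' Iic c
        = ⋂ r : ℚ, ⋂ (_ : c < (r : ℝ)), {b | Δ ≤ ecdf (x b) r} := by
      ext b
      simpa using pinv_ecdf_le_iff_forall_rat hm (x b) hΔ₀ hΔ₁ c
    rw [this]
    exact MeasurableSet.iInter fun r => MeasurableSet.iInter fun _ =>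
      measurableSet_le measurable_const (hx.ecdf measurable_const)

lemma ProbabilityTheory.iIndepFun.indepFun_sumElim {Ω ι κ β : Type*} [MeasurableSpace Ω]
    [MeasurableSpace β] [Fintype ι] [Fintype κ] {P : Measure Ω} {f : ι → Ω → β} {g : κ → Ω → β}
    (h : iIndepFun (Sum.elim f g) P) (hf : ∀ i, Measurable (f i)) (hg : ∀ j, Measurable (g j)) :
    IndepFun (fun ω i => f i ω) (fun ω j => g j ω) P := by
  have hfg : ∀ k, Measurable (Sum.elim f g k) := Sum.rec hf hg
  exact (h.indepFun_finset _ _ (Finset.disjoint_map_inl_map_inr Finset.univ Finset.univ) hfg).comp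
    (measurable_pi_lambda _ fun i => measurable_pi_apply ⟨Sum.inl i, by simp⟩)
    (measurable_pi_lambda _ fun j => measurable_pi_apply ⟨Sum.inr j, by simp⟩)

section Hoeffding

variable {Ω : Type*} [MeasurableSpace Ω] {P : Measure Ω} [IsProbabilityMeasure P] {p : ℕ}
  {X : Fin p → Ω → ℝ} {μ : Measure ℝ}

lemma measureReal_ecdf_add_le_cdf_le (hX : ∀ i, Measurable (X i)) (hindep : iIndepFun X P)
    (hμ : ∀ i, P.map (X i) = μ) (c : ℝ) {ε : ℝ} (hε : 0 ≤ ε) :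
    P.real {ω | ecdf (fun i => X i ω) c + ε ≤ μ.real (Iic c)} ≤ Real.exp (-2 * p * ε ^ 2) := by
  set Z : Fin p → Ω → ℝ := fun i ω => (Iic c).indicator 1 (X i ω)
  have hZ : ∀ i, Measurable (Z i) := fun i =>
    (measurable_one.indicator measurableSet_Iic).comp (hX i)
  have hmean : ∀ i, P[Z i] = μ.real (Iic c) := fun i => by
    rw [← integral_indicator_one measurableSet_Iic, ← hμ i, integral_map (hX i).aemeasurable
      (measurable_one.indicator measurableSet_Iic).aestronglyMeasurable]
  have hsubG : ∀ i ∈ Finset.univ,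
      HasSubgaussianMGF (fun ω => μ.real (Iic c) - Z i ω) (1 / 4) P := by
    intro i _
    have := (hasSubgaussianMGF_of_mem_Icc (μ := P) (hZ i).aemeasurable (ae_of_all _ fun ω =>
      (show Z i ω ∈ Icc (0 : ℝ) 1 by
        by_cases h : X i ω ≤ c <;> simp [Z, h]))).neg
    convert this using 1
    · ext ω
      simp [hmean i]
    · norm_num
  have hindepY : iIndepFun (fun i ω => μ.real (Iic c) - Z i ω) P :=
    hindep.comp (fun _ x => μ.real (Iic c) - (Iic c).indicator 1 x) fun _ =>
      measurable_const.sub (measurable_one.indicator measurableSet_Iic)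
  have hbound := HasSubgaussianMGF.measure_sum_ge_le_of_iIndepFun hindepY hsubG
    (mul_nonneg p.cast_nonneg hε)
  refine le_trans (measureReal_mono fun ω hω => ?_) (hbound.trans_eq ?_)
  · have hsum : ∑ i, Z i ω = p * ecdf (fun i => X i ω) c := by
      rw [natCast_mul_ecdf]
      exact Finset.sum_congr rfl fun i _ => by by_cases h : X i ω ≤ c <;> simp [Z, h]
    simp only [mem_ofPred_eq, Finset.sum_sub_distrib, hsum, Finset.sum_const, Finset.card_univ,
      Fintype.card_fin, nsmul_eq_mul] at hω ⊢
    nlinarith [p.cast_nonneg (α := ℝ)]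
  · rw [Real.exp_eq_exp, Finset.sum_const, Finset.card_univ, Fintype.card_fin, nsmul_eq_mul]
    push_cast
    rcases eq_or_ne (p : ℝ) 0 with hp | hp
    · simp [hp]
    · field_simp
      ring

lemma one_sub_exp_le_measureReal_cdf_lt_ecdf_add (hX : ∀ i, Measurable (X i))
    (hindep : iIndepFun X P) (hμ : ∀ i, P.map (X i) = μ) {Θ : Ω → ℝ} (hΘ : Measurable Θ)
    (hΘX : IndepFun Θ (fun ω i => X i ω) P) {ε : ℝ} (hε : 0 ≤ ε) :
    1 - Real.exp (-2 * p * ε ^ 2)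
      ≤ P.real {ω | μ.real (Iic (Θ ω)) < ecdf (fun i => X i ω) (Θ ω) + ε} := by
  have hXv : Measurable fun ω i => X i ω := measurable_pi_lambda _ hX
  set C : Set (ℝ × (Fin p → ℝ)) := {q | ecdf q.2 q.1 + ε ≤ μ.real (Iic q.1)}
  have hcdf : Measurable fun θ : ℝ => μ.real (Iic θ) :=
    (Monotone.measurable fun a b hab => measure_mono (Iic_subset_Iic.2 hab)).ennreal_toReal
  have hC : MeasurableSet C :=
    measurableSet_le ((measurable_snd.ecdf measurable_fst).add_const ε) (hcdf.comp measurable_fst)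
  -- the threshold is independent of the sample, so each slice is a fixed-threshold event
  have hslice : ∀ θ, (P.map fun ω i => X i ω) (Prod.mk θ ⁻¹' C)
      ≤ ENNReal.ofReal (Real.exp (-2 * p * ε ^ 2)) := fun θ => by
    rw [Measure.map_apply hXv (measurable_prodMk_left hC)]
    exact (ENNReal.le_ofReal_iff_toReal_le (measure_ne_top _ _) (Real.exp_pos _).le).2
      (measureReal_ecdf_add_le_cdf_le hX hindep hμ θ hε)
  have hjoint : P ((fun ω => (Θ ω, fun i => X i ω)) ⁻¹' C)
      = ((P.map Θ).prod (P.map fun ω i => X i ω)) C := by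
    rw [← (indepFun_iff_map_prod_eq_prod_map_map hΘ.aemeasurable hXv.aemeasurable).1 hΘX,
      Measure.map_apply (hΘ.prodMk hXv) hC]
  have : IsProbabilityMeasure (P.map Θ) := Measure.isProbabilityMeasure_map hΘ.aemeasurable
  have hbad : P.real ((fun ω => (Θ ω, fun i => X i ω)) ⁻¹' C) ≤ Real.exp (-2 * p * ε ^ 2) := by
    rw [measureReal_def, hjoint, Measure.prod_apply hC]
    refine ENNReal.toReal_le_of_le_ofReal (Real.exp_pos _).le ?_
    calc _ ≤ ∫⁻ _, ENNReal.ofReal (Real.exp (-2 * p * ε ^ 2)) ∂(P.map Θ) := lintegral_mono hslice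
      _ = _ := by simp
  have hgood : {ω | μ.real (Iic (Θ ω)) < ecdf (fun i => X i ω) (Θ ω) + ε}
      = ((fun ω => (Θ ω, fun i => X i ω)) ⁻¹' C)ᶜ := by
    ext ω
    simp [C]
  rw [hgood, measureReal_compl ((hΘ.prodMk hXv) hC), probReal_univ]
  linarith

end Hoeffding

theorem stmt7_general {U : Type*} [MeasurableSpace U]
    {L : Type*} [MeasurableSpace L]
    {d : ℕ} (F : U → L) (Φ : U → (Fin d → ℝ)) (h : (Fin d → ℝ) → ℝ)
    (hΦ : Measurable Φ) (hh : Measurable h)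
    (PD : Measure (U × L)) [IsProbabilityMeasure PD]
    (ℓj : L)
    (hBpos : 0 < PD {q : U × L | F q.1 = ℓj ∧ q.2 = ℓj})
    {m p : ℕ} {Ω : Type*} [MeasurableSpace Ω] (P : Measure Ω) [IsProbabilityMeasure P]
    (T : Fin m → Ω → U × L) (S : Fin p → Ω → U × L)
    (hmT : ∀ i, Measurable (T i)) (hmS : ∀ i, Measurable (S i))
    (hindep : iIndepFun (Sum.elim T S) P)
    (hS : ∀ i, Measure.map (S i) P = PD[|{q : U × L | F q.1 = ℓj ∧ q.2 = ℓj}])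
    (Δ : ℝ) (hΔ : Δ ∈ Set.Ioo (0 : ℝ) 1)
    (ε : ℝ) (hε : ε ∈ Set.Ioc (0 : ℝ) 1) :
    (P {ω |
        ((PD[|{q : U × L | F q.1 = ℓj ∧ q.2 = ℓj}])
            {q : U × L | h (Φ q.1) ≤ pinv (ecdf fun i => h (Φ (T i ω).1)) Δ}).toReal
          ≤ min 1 (ecdf (fun i => h (Φ (S i ω).1))
              (pinv (ecdf fun i => h (Φ (T i ω).1)) Δ) + ε) ∧
        ((PD[|{q : U × L | F q.1 = ℓj ∧ q.2 = ℓj}])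
            {q : U × L | h (Φ q.1) > pinv (ecdf fun i => h (Φ (T i ω).1)) Δ}).toReal
          ≥ 1 - min 1 (ecdf (fun i => h (Φ (S i ω).1))
              (pinv (ecdf fun i => h (Φ (T i ω).1)) Δ) + ε)}).toReal
      ≥ 1 - 2 * Real.exp (-2 * p * ε ^ 2) := by
  set ν := PD[|{q : U × L | F q.1 = ℓj ∧ q.2 = ℓj}]
  have : IsProbabilityMeasure ν := cond_isProbabilityMeasure hBpos.ne'
  set g : U × L → ℝ := fun q => h (Φ q.1)
  have hg : Measurable g := hh.comp (hΦ.comp measurable_fst)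
  have hθ : Measurable fun t : Fin m → U × L => pinv (ecdf fun i => g (t i)) Δ :=
    measurable_pinv_ecdf (measurable_pi_lambda _ fun i => hg.comp (measurable_pi_apply i))
      hΔ.1 hΔ.2.le
  have hgood := one_sub_exp_le_measureReal_cdf_lt_ecdf_add (μ := ν.map g)
    (fun i => hg.comp (hmS i))
    ((hindep.precomp Sum.inr_injective).comp _ fun _ => hg)
    (fun i => by rw [← Measure.map_map hg (hmS i), hS i])
    (hθ.comp (measurable_pi_lambda _ hmT))
    ((hindep.indepFun_sumElim hmT hmS).comp hθ
      (measurable_pi_lambda _ fun i => hg.comp (measurable_pi_apply i)))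
    hε.1.le
  refine le_trans ?_ (hgood.trans (measureReal_mono fun ω hω => ?_))
  · linarith [Real.exp_pos (-2 * p * ε ^ 2)]
  · set θ := pinv (ecdf fun i => h (Φ (T i ω).1)) Δ
    have hcdf : ν.real (g ⁻¹' Iic θ) < ecdf (fun i => h (Φ (S i ω).1)) θ + ε :=
      (map_measureReal_apply hg measurableSet_Iic).symm.trans_lt hω
    have htail : {q | g q > θ} = (g ⁻¹' Iic θ)ᶜ := by ext; simp
    have hmin := le_min measureReal_le_one hcdf.le
    refine ⟨hmin, ?_⟩
    change _ ≤ ν.real {q | g q > θ}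
    rw [htail, measureReal_compl (hg measurableSet_Iic), probReal_univ]
    linarith

/-- Acceptance bound of Theorem 1, per-ε high-probability form. The training pairs
`T i` are i.i.d. from `P_D(· | B₋)` (misclassified examples assigned class `ℓj`), the
pairs `S i` are i.i.d. from `P_D(· | B₊)` (correctly classified examples of class `ℓj`),
all jointly independent, and `θ = G_m†(Δ)` is the empirical `Δ`-quantile of the
projected misclassified sample. With probability at least `1 - 2 exp(-2 p ε²)` over
both training samples, the true positive-class CDF at `θ` is at most
`min(1, F_p(θ) + ε)`; equivalently, the conditional probability that a fresh sample
with `F(u) = ℓj` and `ℓ = ℓj` satisfies `h(Φ(u)) > θ` is at least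
`1 - min(1, F_p(θ) + ε)`. -/
theorem stmt7 {U : Type*} [MeasurableSpace U]
    {L : Type*} [Fintype L] [MeasurableSpace L] [DiscreteMeasurableSpace L]
    {d : ℕ} (F : U → L) (Φ : U → (Fin d → ℝ)) (h : (Fin d → ℝ) → ℝ)
    (hF : Measurable F) (hΦ : Measurable Φ) (hh : Measurable h)
    (PD : Measure (U × L)) [IsProbabilityMeasure PD]
    (ℓj : L)
    (hBneg : 0 < PD {q : U × L | F q.1 = ℓj ∧ q.2 ≠ ℓj})
    (hBpos : 0 < PD {q : U × L | F q.1 = ℓj ∧ q.2 = ℓj})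
    {m p : ℕ} {Ω : Type*} [MeasurableSpace Ω] (P : Measure Ω) [IsProbabilityMeasure P]
    (T : Fin m → Ω → U × L) (S : Fin p → Ω → U × L)
    (hmT : ∀ i, Measurable (T i)) (hmS : ∀ i, Measurable (S i))
    (hindep : iIndepFun (Sum.elim T S) P)
    (hT : ∀ i, Measure.map (T i) P = PD[|{q : U × L | F q.1 = ℓj ∧ q.2 ≠ ℓj}])
    (hS : ∀ i, Measure.map (S i) P = PD[|{q : U × L | F q.1 = ℓj ∧ q.2 = ℓj}])
    (Δ : ℝ) (hΔ : Δ ∈ Set.Ioo (0 : ℝ) 1)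
    (ε : ℝ) (hε : ε ∈ Set.Ioc (0 : ℝ) 1) :
    (P {ω |
        ((PD[|{q : U × L | F q.1 = ℓj ∧ q.2 = ℓj}])
            {q : U × L | h (Φ q.1) ≤ pinv (ecdf fun i => h (Φ (T i ω).1)) Δ}).toReal
          ≤ min 1 (ecdf (fun i => h (Φ (S i ω).1))
              (pinv (ecdf fun i => h (Φ (T i ω).1)) Δ) + ε) ∧
        ((PD[|{q : U × L | F q.1 = ℓj ∧ q.2 = ℓj}])
            {q : U × L | h (Φ q.1) > pinv (ecdf fun i => h (Φ (T i ω).1)) Δ}).toReal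
          ≥ 1 - min 1 (ecdf (fun i => h (Φ (S i ω).1))
              (pinv (ecdf fun i => h (Φ (T i ω).1)) Δ) + ε)}).toReal
      ≥ 1 - 2 * Real.exp (-2 * p * ε ^ 2) :=
  stmt7_general F Φ h hΦ hh PD ℓj hBpos P T S hmT hmS hindep hS Δ hΔ ε hε
end
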